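/- arXiv:1512.02365 — 3 statements merged into one kernel-verified Lean document; each statement's English description precedes it below -/
import Mathlib

section
/- Let W : GL(n,ℚ_p) → ℂ satisfy (i) W(ug) = ψ(u)·W(g) for all u ∈ N_n and all g ∈ GL(n,ℚ_p), and (ii) W(gj) = ψ_m(j)·W(g) for all j ∈ J_m and all g ∈ GL(n,ℚ_p). If h ∈ GL(n−1,ℚ_p) and W(diag(h,1)) ≠ 0, then h ∈ N_{n−1}·B̄_{n−1,m}, where B̄_{n−1,m} is the subgroup of GL(n−1,ℚ_p) defined by the same recipe as B̄_{n,m} (i.e. lower triangular matrices in the conjugated congruence subgroup J_m of GL(n−1,ℚ_p)). -/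
open Matrix MeasureTheory

noncomputable section

/-- The subgroup (as a set) of upper triangular unipotent matrices in `GL n`. -/
def NN (p n : ℕ) [Fact p.Prime] : Set (GL (Fin n) ℚ_[p]) :=
  {g | (∀ i, g.val i i = 1) ∧ ∀ i j : Fin n, j < i → g.val i j = 0}

/-- Lower triangular unipotent matrices in `GL n`. -/
def NNbar (p n : ℕ) [Fact p.Prime] : Set (GL (Fin n) ℚ_[p]) :=
  {g | (∀ i, g.val i i = 1) ∧ ∀ i j : Fin n, i < j → g.val i j = 0}

/-- Invertible diagonal matrices in `GL n`. -/
def AA (p n : ℕ) [Fact p.Prime] : Set (GL (Fin n) ℚ_[p]) :=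
  {g | ∀ i j : Fin n, i ≠ j → g.val i j = 0}

/-- Invertible lower triangular matrices in `GL n`. -/
def BBbar (p n : ℕ) [Fact p.Prime] : Set (GL (Fin n) ℚ_[p]) :=
  {g | ∀ i j : Fin n, i < j → g.val i j = 0}

/-- The congruence subgroup `K_n^m`: matrices `g` with all entries of `g - I` in `p^m ℤ_p`. -/
def Kcong (p n m : ℕ) [Fact p.Prime] : Set (GL (Fin n) ℚ_[p]) :=
  {g | ∀ i j : Fin n, ‖g.val i j - (1 : Matrix (Fin n) (Fin n) ℚ_[p]) i j‖ ≤ (p : ℝ) ^ (-(m : ℤ))}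

/-- The diagonal matrix `d = diag(1, p², p⁴, …, p^{2n-2})` as an element of `GL n`. -/
def dmat (p n : ℕ) [Fact p.Prime] : GL (Fin n) ℚ_[p] :=
  Matrix.GeneralLinearGroup.mkOfDetNeZero
    (Matrix.diagonal fun i : Fin n => (p : ℚ_[p]) ^ (2 * (i : ℕ)))
    (by
      rw [Matrix.det_diagonal]
      exact Finset.prod_ne_zero_iff.mpr fun i _ =>
        pow_ne_zero _ (Nat.cast_ne_zero.mpr (Fact.out : p.Prime).ne_zero))

/-- The compact open subgroup `J_m = d^m K_n^m d^{-m}`. -/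
def Jm (p n m : ℕ) [Fact p.Prime] : Set (GL (Fin n) ℚ_[p]) :=
  {g | ∃ k ∈ Kcong p n m, g = (dmat p n) ^ m * k * ((dmat p n) ^ m)⁻¹}

/-- The sum of the superdiagonal entries `Σ_{i=1}^{n-1} g_{i,i+1}` of a matrix. -/
def superSum {p : ℕ} [Fact p.Prime] {n : ℕ} (g : Matrix (Fin n) (Fin n) ℚ_[p]) : ℚ_[p] :=
  ∑ i : Fin n, if h : (i : ℕ) + 1 < n then g i ⟨(i : ℕ) + 1, h⟩ else 0

/-- The monoid homomorphism `A ↦ diag(A, 1)` from `n×n` matrices to `(n+1)×(n+1)` matrices. -/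
def embedHom (p n : ℕ) [Fact p.Prime] :
    Matrix (Fin n) (Fin n) ℚ_[p] →* Matrix (Fin (n + 1)) (Fin (n + 1)) ℚ_[p] where
  toFun A := (Matrix.reindexAlgEquiv ℚ_[p] ℚ_[p] finSumFinEquiv)
    (Matrix.fromBlocks A 0 0 (1 : Matrix (Fin 1) (Fin 1) ℚ_[p]))
  map_one' := by
    show (Matrix.reindexAlgEquiv ℚ_[p] ℚ_[p] finSumFinEquiv) _ = 1
    rw [Matrix.fromBlocks_one, _root_.map_one]
  map_mul' A B := by
    show (Matrix.reindexAlgEquiv ℚ_[p] ℚ_[p] finSumFinEquiv) _ =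
      (Matrix.reindexAlgEquiv ℚ_[p] ℚ_[p] finSumFinEquiv) _ *
        (Matrix.reindexAlgEquiv ℚ_[p] ℚ_[p] finSumFinEquiv) _
    rw [← _root_.map_mul]
    congr 1
    rw [Matrix.fromBlocks_multiply]
    simp

/-- The embedding `h ↦ diag(h, 1)` of `GL n` into `GL (n+1)`. -/
def embedGL {p n : ℕ} [Fact p.Prime] (g : GL (Fin n) ℚ_[p]) : GL (Fin (n + 1)) ℚ_[p] :=
  Units.map (embedHom p n) g

/-!
Put `g = diag(h, 1)` and shrink its top-left block one row and column at a time. Suppose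
`g = diag(g₀, 1)` with `g₀` of size `q + 1` and `W g ≠ 0`. For `j ≤ q` the matrix `1 + t E_{j,q+1}`
lies in `N ∩ J_m` for small `t`, and its conjugate by `g` is `1 + t (g e_j) e_{q+1}ᵀ`, again in `N`.
Comparing the two transformation laws of `W` gives `ψ(t (g_{qj} - δ_{qj})) = 1` for all such `t`,
and since `ψ` is nontrivial on `p⁻¹ℤ_p` this bounds row `q` of `g` exactly as membership in `J_m`
requires. So row `q` is the row of a lower triangular element of `J_m`, which is removed on the
right; the rest of column `q` is then removed on the left by an element of `N`, leaving a
matrix `diag(g₁, 1)` with `g₁` of size `q` on which `W` still does not vanish.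
-/

namespace Matrix

variable {ι R : Type*} [DecidableEq ι] [CommRing R]

theorem det_updateRow_one [Fintype ι] (q : ι) (r : ι → R) :
    ((1 : Matrix ι ι R).updateRow q r).det = r q := by
  have hr : ∑ k, r k • (1 : Matrix ι ι R) k = r := by
    ext j
    simp [Finset.sum_apply, one_apply]
  simpa [hr] using det_updateRow_sum (1 : Matrix ι ι R) q r

def shear (s : ι) (v : ι → R) : Matrix ι ι R := 1 + vecMulVec v (Pi.single s 1)

theorem shear_apply (s : ι) (v : ι → R) (i j : ι) :
    shear s v i j = (1 : Matrix ι ι R) i j + v i * (Pi.single s 1 : ι → R) j := rfl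

theorem shear_zero (s : ι) : shear s (0 : ι → R) = 1 := by
  simp [shear, zero_vecMulVec]

theorem shear_mul_shear [Fintype ι] {s : ι} (v : ι → R) {w : ι → R} (hw : w s = 0) :
    shear s v * shear s w = shear s (v + w) := by
  simp only [shear, add_mul, mul_add, one_mul, mul_one, vecMulVec_mul_vecMulVec,
    single_one_dotProduct, hw, zero_smul, vecMulVec_zero, add_zero, add_vecMulVec, add_assoc]

theorem shear_mul [Fintype ι] (s : ι) (v : ι → R) (g : Matrix ι ι R) :
    shear s v * g = g + vecMulVec v (g s) := by
  simp only [shear, add_mul, one_mul, vecMulVec_mul, single_one_vecMul, row]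

theorem mul_shear [Fintype ι] {s : ι} {g : Matrix ι ι R} (hg : g s = Pi.single s 1)
    (v : ι → R) : g * shear s v = shear s (g *ᵥ v) * g := by
  simp only [shear, mul_add, add_mul, mul_one, one_mul, mul_vecMulVec, vecMulVec_mul,
    single_one_vecMul, row, hg]

theorem shear_isUpperTriangular [LinearOrder ι] {s : ι} {v : ι → R}
    (hv : ∀ i, s ≤ i → v i = 0) : (shear s v).IsUpperTriangular := by
  intro i j (hji : j < i)
  rw [shear_apply, one_apply_ne hji.ne', Pi.single_apply]
  split_ifs with hj
  · rw [hv i (hj ▸ hji.le), zero_mul, zero_add]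
  · simp

theorem shear_apply_self {s : ι} {v : ι → R} (hv : v s = 0) (i : ι) : shear s v i i = 1 := by
  rw [shear_apply, one_apply_eq, Pi.single_apply]
  split_ifs with h
  · rw [h, hv, zero_mul, add_zero]
  · rw [mul_zero, add_zero]

/-- `A = diag(A₀, 1)` with `A₀` of size `k`. -/
def IsTopLeftBlock {N : ℕ} (k : ℕ) (A : Matrix (Fin N) (Fin N) R) : Prop :=
  ∀ i j : Fin N, (k ≤ i ∨ k ≤ j) → A i j = (1 : Matrix (Fin N) (Fin N) R) i j

namespace IsTopLeftBlock

variable {N k : ℕ}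

theorem eq_one {A : Matrix (Fin N) (Fin N) R} (hA : IsTopLeftBlock 0 A) : A = 1 :=
  ext fun i j => hA i j (Or.inl i.val.zero_le)

theorem mul {A B : Matrix (Fin N) (Fin N) R} (hA : IsTopLeftBlock k A) (hB : IsTopLeftBlock k B) :
    IsTopLeftBlock k (A * B) := by
  rintro i j (hi | hj)
  · rw [← hB i j (Or.inl hi), mul_apply]
    simp [hA i _ (Or.inl hi), one_apply]
  · rw [← hA i j (Or.inr hj), mul_apply]
    simp [hB _ j (Or.inr hj), one_apply]

theorem inv {A : (Matrix (Fin N) (Fin N) R)ˣ} (hA : IsTopLeftBlock k A.val) :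
    IsTopLeftBlock k A⁻¹.val := by
  rintro i j (hi | hj)
  · rw [← A.mul_inv, mul_apply]
    simp [hA i _ (Or.inl hi), one_apply]
  · rw [← A.inv_mul, mul_apply]
    simp [hA _ j (Or.inr hj), one_apply]

end IsTopLeftBlock

end Matrix

section Subgroups

variable {p N m : ℕ} [Fact p.Prime]

theorem one_mem_NN : (1 : GL (Fin N) ℚ_[p]) ∈ NN p N :=
  ⟨fun i => one_apply_eq i, fun _ _ h => one_apply_ne h.ne'⟩

theorem mul_mem_NN {u v : GL (Fin N) ℚ_[p]} (hu : u ∈ NN p N) (hv : v ∈ NN p N) :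
    u * v ∈ NN p N := by
  refine ⟨fun i => ?_, BlockTriangular.mul (M := u.val) (N := v.val) (b := id) hu.2 hv.2⟩
  rw [Units.val_mul, mul_apply, Finset.sum_eq_single i, hu.1 i, hv.1 i, mul_one]
  · intro k _ hki
    rcases hki.lt_or_gt with hki | hik
    · rw [hu.2 i k hki, zero_mul]
    · rw [hv.2 k i hik, mul_zero]
  · exact fun h => absurd (Finset.mem_univ i) h

theorem one_mem_BBbar : (1 : GL (Fin N) ℚ_[p]) ∈ BBbar p N := fun _ _ h => one_apply_ne h.ne

theorem mul_mem_BBbar {b c : GL (Fin N) ℚ_[p]} (hb : b ∈ BBbar p N) (hc : c ∈ BBbar p N) :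
    b * c ∈ BBbar p N :=
  BlockTriangular.mul (M := b.val) (N := c.val) (b := OrderDual.toDual) hb hc

theorem mul_mem_Kcong {k k' : GL (Fin N) ℚ_[p]} (hk : k ∈ Kcong p N m) (hk' : k' ∈ Kcong p N m) :
    k * k' ∈ Kcong p N m := by
  set ε : ℝ := (p : ℝ) ^ (-(m : ℤ))
  have hε0 : 0 ≤ ε := by positivity
  have hε1 : ε ≤ 1 :=
    zpow_le_one_of_nonpos₀ (by exact_mod_cast (Fact.out : p.Prime).one_lt.le) (by simp)
  have hsplit : (k * k').val - 1 = (k.val - 1) * (k'.val - 1) + (k.val - 1) + (k'.val - 1) := by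
    rw [Units.val_mul]
    noncomm_ring
  intro i j
  rw [← Matrix.sub_apply, hsplit, Matrix.add_apply, Matrix.add_apply]
  refine (Padic.nonarchimedean _ _).trans
    (max_le ((Padic.nonarchimedean _ _).trans (max_le ?_ (hk i j))) (hk' i j))
  rw [Matrix.mul_apply]
  refine IsUltrametricDist.norm_sum_le_of_forall_le_of_nonneg hε0 fun l _ => ?_
  rw [norm_mul]
  calc _ ≤ ε * ε := mul_le_mul (hk i l) (hk' l j) (norm_nonneg _) hε0
    _ ≤ ε := mul_le_of_le_one_left hε0 hε1

theorem mem_Jm_iff_conj {g : GL (Fin N) ℚ_[p]} :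
    g ∈ Jm p N m ↔ ((dmat p N) ^ m)⁻¹ * g * (dmat p N) ^ m ∈ Kcong p N m := by
  constructor
  · rintro ⟨k, hk, rfl⟩
    simpa [mul_assoc] using hk
  · exact fun hk => ⟨_, hk, by group⟩

theorem one_mem_Jm : (1 : GL (Fin N) ℚ_[p]) ∈ Jm p N m := by
  rw [mem_Jm_iff_conj, mul_one, inv_mul_cancel]
  intro i j
  simp only [Units.val_one, sub_self, norm_zero]
  positivity

theorem mul_mem_Jm {g g' : GL (Fin N) ℚ_[p]} (hg : g ∈ Jm p N m) (hg' : g' ∈ Jm p N m) :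
    g * g' ∈ Jm p N m := by
  rw [mem_Jm_iff_conj] at *
  convert mul_mem_Kcong hg hg' using 1
  group

theorem exists_mem_NN_val_eq {A : Matrix (Fin N) (Fin N) ℚ_[p]} (hA : A.IsUpperTriangular)
    (hdiag : ∀ i, A i i = 1) : ∃ u ∈ NN p N, u.val = A :=
  ⟨GeneralLinearGroup.mkOfDetNeZero A (by simp [det_of_isUpperTriangular hA, hdiag]),
    ⟨hdiag, hA⟩, rfl⟩

theorem exists_mem_BBbar_val_eq {A : Matrix (Fin N) (Fin N) ℚ_[p]} (hA : A.IsLowerTriangular)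
    (hdet : A.det ≠ 0) : ∃ b ∈ BBbar p N, b.val = A :=
  ⟨GeneralLinearGroup.mkOfDetNeZero A hdet, hA, rfl⟩

end Subgroups

section Jm

variable {p N m : ℕ} [Fact p.Prime]

theorem dmat_pow_val :
    ((dmat p N) ^ m).val = diagonal fun i : Fin N => (p : ℚ_[p]) ^ (2 * m * (i : ℤ)) := by
  rw [Units.val_pow_eq_pow_val]
  simp only [dmat, GeneralLinearGroup.val_mkOfDetNeZero, diagonal_pow]
  congr 1
  ext i
  rw [Pi.pow_apply, ← pow_mul, ← zpow_natCast]
  push_cast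
  ring_nf

theorem conj_dmat_pow_apply (g : GL (Fin N) ℚ_[p]) (i j : Fin N) :
    (((dmat p N) ^ m)⁻¹ * g * (dmat p N) ^ m).val i j =
      (p : ℚ_[p]) ^ (2 * m * ((j : ℤ) - i)) * g.val i j := by
  have hp : (p : ℚ_[p]) ≠ 0 := Nat.cast_ne_zero.mpr (Fact.out : p.Prime).ne_zero
  have hinv : ((dmat p N) ^ m)⁻¹.val =
      diagonal fun i : Fin N => ((p : ℚ_[p]) ^ (2 * m * (i : ℤ)))⁻¹ := by
    refine Units.inv_eq_of_mul_eq_one_right ?_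
    rw [dmat_pow_val, diagonal_mul_diagonal, ← diagonal_one]
    exact congrArg diagonal (funext fun i => mul_inv_cancel₀ (zpow_ne_zero _ hp))
  rw [Units.val_mul, Units.val_mul, hinv, dmat_pow_val, mul_diagonal, diagonal_mul,
    mul_sub, zpow_sub₀ hp, div_eq_mul_inv]
  ring

theorem mem_Jm_iff {g : GL (Fin N) ℚ_[p]} :
    g ∈ Jm p N m ↔ ∀ i j : Fin N,
      ‖g.val i j - (1 : Matrix (Fin N) (Fin N) ℚ_[p]) i j‖ ≤
        (p : ℝ) ^ (2 * m * ((j : ℤ) - i) - m) := by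
  have hp : (0 : ℝ) < p := by exact_mod_cast (Fact.out : p.Prime).pos
  rw [mem_Jm_iff_conj]
  refine forall₂_congr fun i j => ?_
  have hshift : (((dmat p N) ^ m)⁻¹ * g * (dmat p N) ^ m).val i j - (1 : Matrix _ _ ℚ_[p]) i j =
      (p : ℚ_[p]) ^ (2 * m * ((j : ℤ) - i)) * (g.val i j - (1 : Matrix _ _ ℚ_[p]) i j) := by
    rw [conj_dmat_pow_apply, mul_sub]
    rcases eq_or_ne i j with rfl | hij
    · simp
    · simp [one_apply_ne hij]
  rw [hshift, norm_mul, Padic.norm_p_zpow, ← le_div_iff₀' (zpow_pos hp _), ← zpow_sub₀ hp.ne']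
  ring_nf

end Jm

theorem norm_le_of_forall_psi_mul_eq_one {p : ℕ} [Fact p.Prime] {ψ : AddChar ℚ_[p] ℂ}
    (hψ : ∃ x : ℚ_[p], ‖x‖ ≤ p ∧ ψ x ≠ 1) {c : ℚ_[p]} {M : ℤ}
    (h : ∀ t : ℚ_[p], ‖t‖ ≤ (p : ℝ) ^ M → ψ (t * c) = 1) : ‖c‖ ≤ (p : ℝ) ^ (-M) := by
  have hp : (0 : ℝ) < p := by exact_mod_cast (Fact.out : p.Prime).pos
  by_contra hc
  obtain ⟨x, hx, hψx⟩ := hψ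
  have hc' : (p : ℝ) ^ (-M + 1) ≤ ‖c‖ :=
    not_lt.mp fun hlt => hc ((Padic.norm_le_pow_iff_norm_lt_pow_add_one c (-M)).mpr hlt)
  have hc0 : c ≠ 0 := by
    rintro rfl
    exact hc (by rw [norm_zero]; positivity)
  apply hψx
  rw [← inv_mul_cancel_right₀ hc0 x]
  refine h _ ?_
  calc ‖x * c⁻¹‖ = ‖x‖ / ‖c‖ := by rw [norm_mul, norm_inv, div_eq_mul_inv]
    _ ≤ p / (p : ℝ) ^ (-M + 1) := div_le_div₀ hp.le hx (by positivity) hc'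
    _ = (p : ℝ) ^ M := by rw [zpow_add_one₀ hp.ne', _root_.zpow_neg]; field_simp

section RowColumnReduction

variable {p N m : ℕ} [Fact p.Prime]

theorem exists_BBbar_Jm_row_eq (hm : 1 ≤ m) {g : GL (Fin N) ℚ_[p]} {q : Fin N}
    (hg : IsTopLeftBlock ((q : ℕ) + 1) g.val)
    (hrow : ∀ j ≤ q, ‖g.val q j - (1 : Matrix (Fin N) (Fin N) ℚ_[p]) q j‖ ≤
      (p : ℝ) ^ (2 * m * ((j : ℤ) - q) - m)) :
    ∃ b ∈ BBbar p N ∩ Jm p N m, IsTopLeftBlock ((q : ℕ) + 1) b.val ∧ b.val q = g.val q := by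
  have hgqq : g.val q q ≠ 0 := by
    intro h0
    have hlt : (p : ℝ) ^ (-(m : ℤ)) < 1 :=
      zpow_lt_one_of_neg₀ (by exact_mod_cast (Fact.out : p.Prime).one_lt) (by omega)
    have := hrow q le_rfl
    rw [h0, one_apply_eq, zero_sub, norm_neg, norm_one, sub_self, mul_zero, zero_sub] at this
    exact this.not_gt hlt
  have hlow : ((1 : Matrix (Fin N) (Fin N) ℚ_[p]).updateRow q (g.val q)).IsLowerTriangular := by
    intro i j (hij : i < j)
    rcases eq_or_ne i q with rfl | hi
    · rw [updateRow_self, hg i j (Or.inr hij), one_apply_ne hij.ne]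
    · rw [updateRow_ne hi, one_apply_ne hij.ne]
  obtain ⟨b, hb, hb_val⟩ := exists_mem_BBbar_val_eq hlow (by rwa [det_updateRow_one])
  refine ⟨b, ⟨hb, mem_Jm_iff.mpr fun i j => ?_⟩, fun i j hij => ?_, by rw [hb_val, updateRow_self]⟩
  · rw [hb_val]
    rcases eq_or_ne i q with rfl | hi
    · rw [updateRow_self]
      rcases le_or_gt j i with hj | hj
      · exact hrow j hj
      · rw [hg i j (Or.inr hj), sub_self, norm_zero]
        positivity
    · rw [updateRow_ne hi, sub_self, norm_zero]
      positivity
  · rw [hb_val]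
    rcases eq_or_ne i q with rfl | hi
    · rw [updateRow_self, hg i j hij]
    · rw [updateRow_ne hi]

theorem exists_NN_inv_mul_isTopLeftBlock {g : GL (Fin N) ℚ_[p]} {q : Fin N}
    (hg : IsTopLeftBlock ((q : ℕ) + 1) g.val) (hrow : g.val q = Pi.single q 1) :
    ∃ u ∈ NN p N, IsTopLeftBlock q (u⁻¹ * g).val := by
  set v : Fin N → ℚ_[p] := fun i => g.val i q - (1 : Matrix (Fin N) (Fin N) ℚ_[p]) i q
  have hv : ∀ i, q ≤ i → v i = 0 := by
    intro i hi
    rcases hi.eq_or_lt with rfl | hi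
    · simp [v, hrow]
    · simp [v, hg i q (Or.inl hi)]
  obtain ⟨u, hu, hu_val⟩ := exists_mem_NN_val_eq (shear_isUpperTriangular hv)
    (shear_apply_self (hv q le_rfl))
  have hu_inv : u⁻¹.val = shear q (-v) := by
    refine Units.inv_eq_of_mul_eq_one_right ?_
    rw [hu_val, shear_mul_shear v (by simp [hv q le_rfl]), add_neg_cancel, shear_zero]
  refine ⟨u, hu, fun i j hij => ?_⟩
  rw [Units.val_mul, hu_inv, shear_mul, hrow, Matrix.add_apply, vecMulVec_apply]
  rcases eq_or_ne j q with rfl | hj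
  · simp [v]
  · rw [Pi.single_eq_of_ne hj, mul_zero, add_zero]
    rcases eq_or_ne i q with rfl | hi
    · rw [hrow, Pi.single_eq_of_ne' hj.symm, one_apply_ne hj.symm]
    · refine hg i j ?_
      have := Fin.val_ne_of_ne hi
      have := Fin.val_ne_of_ne hj
      omega

end RowColumnReduction

section Whittaker

variable {p N m : ℕ} [Fact p.Prime]

theorem superSum_one : superSum (1 : Matrix (Fin N) (Fin N) ℚ_[p]) = 0 :=
  Finset.sum_eq_zero fun i _ => by
    split_ifs
    · exact one_apply_ne (by simp [Fin.ext_iff])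
    · rfl

theorem superSum_shear {q s : Fin N} (hqs : (q : ℕ) + 1 = s) (v : Fin N → ℚ_[p]) :
    superSum (shear s v) = v q := by
  rw [superSum, Finset.sum_eq_single q]
  · have hs : (⟨(q : ℕ) + 1, hqs ▸ s.isLt⟩ : Fin N) = s := Fin.ext hqs
    rw [dif_pos (hqs ▸ s.isLt), hs, shear_apply, one_apply_ne (by simp [Fin.ext_iff, ← hqs]),
      Pi.single_eq_same, zero_add, mul_one]
  · intro i _ hiq
    split_ifs
    · rw [shear_apply, one_apply_ne (by simp [Fin.ext_iff]),
        Pi.single_eq_of_ne (by simp [Fin.ext_iff, ← hqs, Fin.val_ne_of_ne hiq]), mul_zero, add_zero]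
    · rfl
  · exact fun h => absurd (Finset.mem_univ q) h

def LeftNEquivariant (ψ : AddChar ℚ_[p] ℂ) (W : GL (Fin N) ℚ_[p] → ℂ) : Prop :=
  ∀ u ∈ NN p N, ∀ g, W (u * g) = ψ (superSum u.val) * W g

def RightJmEquivariant (ψ : AddChar ℚ_[p] ℂ) (m : ℕ) (W : GL (Fin N) ℚ_[p] → ℂ) : Prop :=
  ∀ g, ∀ b ∈ BBbar p N ∩ Jm p N m, ∀ u ∈ NN p N ∩ Jm p N m,
    W (g * (b * u)) = ψ (superSum u.val) * W g

variable {ψ : AddChar ℚ_[p] ℂ} {W : GL (Fin N) ℚ_[p] → ℂ}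

theorem RightJmEquivariant.mul_BBbar (hW2 : RightJmEquivariant ψ m W) (g : GL (Fin N) ℚ_[p])
    {b : GL (Fin N) ℚ_[p]} (hb : b ∈ BBbar p N ∩ Jm p N m) : W (g * b) = W g := by
  simpa [superSum_one] using hW2 g b hb 1 ⟨one_mem_NN, one_mem_Jm⟩

theorem LeftNEquivariant.ne_zero_of_mul (hW1 : LeftNEquivariant ψ W) {u g : GL (Fin N) ℚ_[p]}
    (hu : u ∈ NN p N) (h : W (u * g) ≠ 0) : W g ≠ 0 := fun h0 => h (by rw [hW1 u hu, h0, mul_zero])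

theorem psi_superSum_eq_of_mul_eq (hW1 : LeftNEquivariant ψ W) (hW2 : RightJmEquivariant ψ m W)
    {g u j : GL (Fin N) ℚ_[p]} (hg : W g ≠ 0) (hu : u ∈ NN p N) (hj : j ∈ NN p N ∩ Jm p N m)
    (h : u * g = g * j) : ψ (superSum u.val) = ψ (superSum j.val) := by
  refine mul_right_cancel₀ hg ?_
  rw [← hW1 u hu g, h, ← hW2 g 1 ⟨one_mem_BBbar, one_mem_Jm⟩ j hj, one_mul]

theorem norm_row_sub_one_le (hψ : ∃ x : ℚ_[p], ‖x‖ ≤ p ∧ ψ x ≠ 1) (hW1 : LeftNEquivariant ψ W)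
    (hW2 : RightJmEquivariant ψ m W) {g : GL (Fin N) ℚ_[p]} (hW : W g ≠ 0) {q s : Fin N}
    (hqs : (q : ℕ) + 1 = s) (hg : IsTopLeftBlock s g.val) {j : Fin N} (hj : j ≤ q) :
    ‖g.val q j - (1 : Matrix (Fin N) (Fin N) ℚ_[p]) q j‖ ≤
      (p : ℝ) ^ (2 * m * ((j : ℤ) - q) - m) := by
  have hjs : (j : ℕ) < s := by rw [← hqs]; exact Nat.lt_succ_of_le hj
  rw [show 2 * m * ((j : ℤ) - q) - m = -(2 * m * ((s : ℤ) - j) - m) by rw [← hqs]; push_cast; ring]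
  refine norm_le_of_forall_psi_mul_eq_one hψ fun t ht => ?_
  have hv : ∀ i : Fin N, s ≤ i → (Pi.single j t : Fin N → ℚ_[p]) i = 0 := fun i hi => by
    have hij : i ≠ j := Fin.ne_of_val_ne (by rw [Fin.le_def] at hi; omega)
    simp [hij]
  have hgv : ∀ i : Fin N, s ≤ i → (g.val *ᵥ Pi.single j t) i = 0 := fun i hi => by
    have hij : i ≠ j := Fin.ne_of_val_ne (by rw [Fin.le_def] at hi; omega)
    simp [hg i j (Or.inl hi), one_apply_ne hij]
  obtain ⟨ju, hju, hju_val⟩ := exists_mem_NN_val_eq (shear_isUpperTriangular hv)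
    (shear_apply_self (hv s le_rfl))
  obtain ⟨uu, huu, huu_val⟩ := exists_mem_NN_val_eq (shear_isUpperTriangular hgv)
    (shear_apply_self (hgv s le_rfl))
  have hjuJ : ju ∈ Jm p N m := by
    rw [mem_Jm_iff]
    intro a b
    rw [hju_val, shear_apply, add_sub_cancel_left]
    rcases eq_or_ne a j with rfl | ha
    · rcases eq_or_ne b s with rfl | hb
      · simpa using ht
      · rw [Pi.single_eq_of_ne hb, mul_zero, norm_zero]
        positivity
    · rw [Pi.single_eq_of_ne ha, zero_mul, norm_zero]
      positivity
  have hrow : g.val s = Pi.single s 1 :=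
    funext fun b => (hg s b (Or.inl le_rfl)).trans one_eq_pi_single
  have hcomm : uu * g = g * ju := by
    ext : 1
    rw [Units.val_mul, Units.val_mul, huu_val, hju_val, mul_shear hrow]
  have := psi_superSum_eq_of_mul_eq hW1 hW2 hW huu ⟨hju, hjuJ⟩ hcomm
  rw [huu_val, hju_val, superSum_shear hqs, superSum_shear hqs] at this
  rw [mul_sub, AddChar.map_sub_eq_div, div_eq_one_iff_eq (AddChar.val_isUnit ψ _).ne_zero]
  simpa [mul_comm, one_apply, Pi.single_apply] using this

theorem exists_shrink_isTopLeftBlock (hψ : ∃ x : ℚ_[p], ‖x‖ ≤ p ∧ ψ x ≠ 1) (hW1 : LeftNEquivariant ψ W)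
    (hW2 : RightJmEquivariant ψ m W) (hm : 1 ≤ m) {g : GL (Fin N) ℚ_[p]} (hW : W g ≠ 0)
    {q s : Fin N} (hqs : (q : ℕ) + 1 = s) (hg : IsTopLeftBlock s g.val) :
    ∃ u ∈ NN p N, ∃ b ∈ BBbar p N ∩ Jm p N m, ∃ g₀ : GL (Fin N) ℚ_[p],
      IsTopLeftBlock q g₀.val ∧ W g₀ ≠ 0 ∧ g = u * g₀ * b := by
  obtain ⟨b, hb, hb_blk, hb_row⟩ := exists_BBbar_Jm_row_eq hm (hqs ▸ hg)
    fun j hj => norm_row_sub_one_le hψ hW1 hW2 hW hqs hg hj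
  set g' := g * b⁻¹ with hg'
  have hg'_blk : IsTopLeftBlock ((q : ℕ) + 1) g'.val := by
    rw [hg', Units.val_mul]
    exact (hqs ▸ hg).mul hb_blk.inv
  have hg'_row : g'.val q = Pi.single q 1 := by
    ext j
    rw [hg', Units.val_mul, mul_apply, ← hb_row, ← mul_apply, ← Units.val_mul, mul_inv_cancel,
      Units.val_one, one_eq_pi_single]
  have hWg' : W g' ≠ 0 := by rwa [← hW2.mul_BBbar g' hb, hg', inv_mul_cancel_right]
  obtain ⟨u, hu, hu_blk⟩ := exists_NN_inv_mul_isTopLeftBlock hg'_blk hg'_row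
  refine ⟨u, hu, b, hb, u⁻¹ * g', hu_blk, hW1.ne_zero_of_mul hu ?_,
    by rw [mul_inv_cancel_left, hg', inv_mul_cancel_right]⟩
  rwa [mul_inv_cancel_left]

theorem exists_NN_mul_BBbar_of_isTopLeftBlock (hψ : ∃ x : ℚ_[p], ‖x‖ ≤ p ∧ ψ x ≠ 1)
    (hW1 : LeftNEquivariant ψ W) (hW2 : RightJmEquivariant ψ m W) (hm : 1 ≤ m) :
    ∀ k < N, ∀ g : GL (Fin N) ℚ_[p], IsTopLeftBlock k g.val → W g ≠ 0 →
      ∃ u ∈ NN p N, ∃ b ∈ BBbar p N ∩ Jm p N m, g = u * b := by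
  intro k
  induction k with
  | zero =>
    intro _ g hg _
    exact ⟨1, one_mem_NN, 1, ⟨one_mem_BBbar, one_mem_Jm⟩, Units.ext (by simp [hg.eq_one])⟩
  | succ k ih =>
    intro hk g hg hW
    obtain ⟨u, hu, b, hb, g₀, hg₀, hW₀, rfl⟩ :=
      exists_shrink_isTopLeftBlock hψ hW1 hW2 hm hW (q := ⟨k, by omega⟩) (s := ⟨k + 1, hk⟩) rfl hg
    obtain ⟨u₀, hu₀, b₀, hb₀, rfl⟩ := ih (by omega) g₀ hg₀ hW₀
    exact ⟨u * u₀, mul_mem_NN hu hu₀, b₀ * b, ⟨mul_mem_BBbar hb₀.1 hb.1, mul_mem_Jm hb₀.2 hb.2⟩,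
      by group⟩

end Whittaker

section Embedding

variable {p n : ℕ} [Fact p.Prime]

theorem embedHom_castSucc_castSucc (A : Matrix (Fin n) (Fin n) ℚ_[p]) (i j : Fin n) :
    embedHom p n A i.castSucc j.castSucc = A i j := by
  simp [embedHom]

theorem embedHom_castSucc_last (A : Matrix (Fin n) (Fin n) ℚ_[p]) (i : Fin n) :
    embedHom p n A i.castSucc (Fin.last n) = 0 := by
  simp [embedHom]

theorem embedHom_last_castSucc (A : Matrix (Fin n) (Fin n) ℚ_[p]) (j : Fin n) :
    embedHom p n A (Fin.last n) j.castSucc = 0 := by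
  simp [embedHom]

theorem embedHom_last_last (A : Matrix (Fin n) (Fin n) ℚ_[p]) :
    embedHom p n A (Fin.last n) (Fin.last n) = 1 := by
  simp [embedHom]

theorem isTopLeftBlock_embedGL (h : GL (Fin n) ℚ_[p]) : IsTopLeftBlock n (embedGL h).val := by
  intro i j hij
  change embedHom p n h.val i j = _
  induction i using Fin.lastCases with
  | last =>
    induction j using Fin.lastCases with
    | last => rw [embedHom_last_last, one_apply_eq]
    | cast j => rw [embedHom_last_castSucc, one_apply_ne (Fin.castSucc_lt_last j).ne']
  | cast i =>
    induction j using Fin.lastCases with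
    | last => rw [embedHom_castSucc_last, one_apply_ne (Fin.castSucc_lt_last i).ne]
    | cast j => simp only [Fin.val_castSucc] at hij; omega

variable {m : ℕ}

theorem exists_NN_mul_BBbar_of_embedGL_eq {h : GL (Fin n) ℚ_[p]} {u b : GL (Fin (n + 1)) ℚ_[p]}
    (hu : u ∈ NN p (n + 1)) (hb : b ∈ BBbar p (n + 1) ∩ Jm p (n + 1) m)
    (hub : embedGL h = u * b) : ∃ u' ∈ NN p n, ∃ b' ∈ BBbar p n ∩ Jm p n m, h = u' * b' := by
  have hentry (i j : Fin (n + 1)) : (u.val * b.val) i j = embedHom p n h.val i j := by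
    rw [← Units.val_mul, ← hub]
    rfl
  have hu_last (i : Fin n) : u.val i.castSucc (Fin.last n) = 0 := by
    have hb_last : b.val (Fin.last n) (Fin.last n) = 1 := by
      have := hentry (Fin.last n) (Fin.last n)
      rw [mul_apply, Fin.sum_univ_castSucc, hu.1, one_mul, embedHom_last_last] at this
      simpa [fun k : Fin n => hu.2 (Fin.last n) k.castSucc (Fin.castSucc_lt_last k)] using this
    have := hentry i.castSucc (Fin.last n)
    rw [mul_apply, Fin.sum_univ_castSucc, hb_last, mul_one, embedHom_castSucc_last] at this
    simpa [fun k : Fin n => hb.1 k.castSucc (Fin.last n) (Fin.castSucc_lt_last k)] using this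
  have hprod : u.val.submatrix Fin.castSucc Fin.castSucc * b.val.submatrix Fin.castSucc Fin.castSucc
      = h.val := by
    ext i j
    have := hentry i.castSucc j.castSucc
    rw [mul_apply, Fin.sum_univ_castSucc, hu_last, zero_mul, add_zero,
      embedHom_castSucc_castSucc] at this
    rw [mul_apply, ← this]
    rfl
  obtain ⟨u', hu', hu'_val⟩ := exists_mem_NN_val_eq (A := u.val.submatrix Fin.castSucc Fin.castSucc)
    (fun i j hij => hu.2 _ _ (Fin.castSucc_lt_castSucc_iff.2 hij)) (fun i => hu.1 _)
  have hb'_val : (u'⁻¹ * h).val = b.val.submatrix Fin.castSucc Fin.castSucc := by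
    rw [Units.val_mul, ← hprod, ← hu'_val, ← Matrix.mul_assoc, ← Units.val_mul, inv_mul_cancel,
      Units.val_one, Matrix.one_mul]
  refine ⟨u', hu', u'⁻¹ * h, ⟨fun i j hij => ?_, mem_Jm_iff.2 fun i j => ?_⟩,
    (mul_inv_cancel_left u' h).symm⟩
  · rw [hb'_val]
    exact hb.1 _ _ (Fin.castSucc_lt_castSucc_iff.2 hij)
  · simpa [hb'_val, one_apply] using mem_Jm_iff.1 hb.2 i.castSucc j.castSucc

end Embedding

theorem statement0_general (p n m : ℕ) [Fact p.Prime] (hm : 1 ≤ m)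
    (ψ : AddChar ℚ_[p] ℂ)
    (hψnontriv : ∃ x : ℚ_[p], ‖x‖ ≤ (p : ℝ) ∧ ψ x ≠ 1)
    (W : GL (Fin (n + 1)) ℚ_[p] → ℂ)
    (hW1 : ∀ u ∈ NN p (n + 1), ∀ g : GL (Fin (n + 1)) ℚ_[p],
      W (u * g) = ψ (superSum u.val) * W g)
    (hW2 : ∀ g : GL (Fin (n + 1)) ℚ_[p],
      ∀ b ∈ BBbar p (n + 1) ∩ Jm p (n + 1) m, ∀ u ∈ NN p (n + 1) ∩ Jm p (n + 1) m,
        W (g * (b * u)) = ψ (superSum u.val) * W g)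
    (h : GL (Fin n) ℚ_[p]) (hne : W (embedGL h) ≠ 0) :
    ∃ u ∈ NN p n, ∃ b ∈ BBbar p n ∩ Jm p n m, h = u * b := by
  obtain ⟨u, hu, b, hb, hub⟩ := exists_NN_mul_BBbar_of_isTopLeftBlock hψnontriv hW1 hW2 hm
    n n.lt_succ_self (embedGL h) (isTopLeftBlock_embedGL h) hne
  exact exists_NN_mul_BBbar_of_embedGL_eq hu hb hub

/-- If `W` transforms on the left under `(N_{n+1}, ψ)` and on the right under
`(J_m, ψ_m)` (expressed via the factorization `j = b̄ u`), and `W(diag(h,1)) ≠ 0` for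
`h ∈ GL(n, ℚ_p)`, then `h ∈ N_n · B̄_{n,m}`. -/
theorem statement0 (p n m : ℕ) [Fact p.Prime] (hn : 1 ≤ n) (hm : 1 ≤ m)
    (ψ : AddChar ℚ_[p] ℂ)
    (hψtriv : ∀ x : ℚ_[p], ‖x‖ ≤ 1 → ψ x = 1)
    (hψnontriv : ∃ x : ℚ_[p], ‖x‖ ≤ (p : ℝ) ∧ ψ x ≠ 1)
    (W : GL (Fin (n + 1)) ℚ_[p] → ℂ)
    (hW1 : ∀ u ∈ NN p (n + 1), ∀ g : GL (Fin (n + 1)) ℚ_[p],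
      W (u * g) = ψ (superSum u.val) * W g)
    (hW2 : ∀ g : GL (Fin (n + 1)) ℚ_[p],
      ∀ b ∈ BBbar p (n + 1) ∩ Jm p (n + 1) m, ∀ u ∈ NN p (n + 1) ∩ Jm p (n + 1) m,
        W (g * (b * u)) = ψ (superSum u.val) * W g)
    (h : GL (Fin n) ℚ_[p]) (hne : W (embedGL h) ≠ 0) :
    ∃ u ∈ NN p n, ∃ b ∈ BBbar p n ∩ Jm p n m, h = u * b :=
  statement0_general p n m hm ψ hψnontriv W hW1 hW2 h hne

end
end

section
/- The map ψ_m : J_m → ℂˣ defined by ψ_m(j) = ψ(u), where j = b̄·u is the unique factorization of j ∈ J_m with b̄ ∈ B̄_{n,m} and u ∈ N_{n,m}, is a group homomorphism: ψ_m(j·j') = ψ_m(j)·ψ_m(j') for all j, j' ∈ J_m. -/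
open Matrix MeasureTheory

noncomputable section

/-- The entry-bound property enjoyed by all elements of `J_m`. -/
def Pm (p n m : ℕ) [Fact p.Prime] (g : GL (Fin n) ℚ_[p]) : Prop :=
  ∀ i j : Fin n, ‖g.val i j - (1 : Matrix (Fin n) (Fin n) ℚ_[p]) i j‖ ≤
    (p : ℝ) ^ (2 * (m : ℤ) * ((j : ℤ) - (i : ℤ)) - (m : ℤ))

lemma Jm_Pm {p n m : ℕ} [Fact p.Prime] {g : GL (Fin n) ℚ_[p]} (hg : g ∈ Jm p n m) :
    Pm p n m g := by
  obtain ⟨k, hk, hgk⟩ := hg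
  intro i j
  have hp1 : (1 : ℝ) < p := Nat.one_lt_cast.mpr (Fact.out : p.Prime).one_lt
  have hp0 : (0 : ℝ) < p := lt_trans one_pos hp1
  have hpR : (p : ℝ) ≠ 0 := ne_of_gt hp0
  have hpq : (p : ℚ_[p]) ≠ 0 := Nat.cast_ne_zero.mpr (Fact.out : p.Prime).ne_zero
  have hmul : g * dmat p n ^ m = dmat p n ^ m * k := by
    rw [hgk]; group
  have hD : ((dmat p n ^ m : GL (Fin n) ℚ_[p]) : Matrix (Fin n) (Fin n) ℚ_[p])
      = Matrix.diagonal (fun i : Fin n => (p : ℚ_[p]) ^ (2 * (i : ℕ) * m)) := by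
    have : ((dmat p n : GL (Fin n) ℚ_[p]) : Matrix (Fin n) (Fin n) ℚ_[p])
        = Matrix.diagonal (fun i : Fin n => (p : ℚ_[p]) ^ (2 * (i : ℕ))) := rfl
    rw [Units.val_pow_eq_pow_val, this, Matrix.diagonal_pow]
    funext a b
    rcases eq_or_ne a b with rfl | hab
    · simp [Matrix.diagonal_apply_eq, Pi.pow_apply, ← pow_mul]
    · simp [Matrix.diagonal_apply_ne _ hab]
  have hentry : g.val i j * (p : ℚ_[p]) ^ (2 * (j : ℕ) * m)
      = (p : ℚ_[p]) ^ (2 * (i : ℕ) * m) * k.val i j := by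
    have h2 := congrArg (fun M : GL (Fin n) ℚ_[p] => (M : Matrix (Fin n) (Fin n) ℚ_[p]) i j) hmul
    simpa [Units.val_mul, hD, Matrix.mul_diagonal, Matrix.diagonal_mul] using h2
  have hE : (1 : Matrix (Fin n) (Fin n) ℚ_[p]) i j * (p : ℚ_[p]) ^ (2 * (j : ℕ) * m)
      = (p : ℚ_[p]) ^ (2 * (i : ℕ) * m) * (1 : Matrix (Fin n) (Fin n) ℚ_[p]) i j := by
    rcases eq_or_ne i j with rfl | hne
    · ring
    · simp [Matrix.one_apply, hne]
  have hgij : g.val i j - (1 : Matrix (Fin n) (Fin n) ℚ_[p]) i j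
      = (p : ℚ_[p]) ^ (2 * (i : ℕ) * m)
        * (k.val i j - (1 : Matrix (Fin n) (Fin n) ℚ_[p]) i j)
        * ((p : ℚ_[p]) ^ (2 * (j : ℕ) * m))⁻¹ := by
    have hne : (p : ℚ_[p]) ^ (2 * (j : ℕ) * m) ≠ 0 := pow_ne_zero _ hpq
    field_simp
    linear_combination hentry - hE
  rw [hgij, norm_mul, norm_mul, norm_inv, Padic.norm_p_pow, Padic.norm_p_pow]
  have hkb := hk i j
  calc (p:ℝ) ^ (-(2 * (i:ℕ) * m) : ℤ) * ‖k.val i j - (1 : Matrix (Fin n) (Fin n) ℚ_[p]) i j‖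
        * ((p:ℝ) ^ (-(2 * (j:ℕ) * m) : ℤ))⁻¹
      ≤ (p:ℝ) ^ (-(2 * (i:ℕ) * m) : ℤ) * (p:ℝ) ^ (-(m:ℤ))
        * ((p:ℝ) ^ (-(2 * (j:ℕ) * m) : ℤ))⁻¹ := by
        gcongr
    _ = (p : ℝ) ^ (2 * (m : ℤ) * ((j : ℤ) - (i : ℤ)) - (m : ℤ)) := by
        rw [← _root_.zpow_neg, ← zpow_add₀ hpR, ← zpow_add₀ hpR]
        congr 1
        ring
lemma superSum_lower {p : ℕ} [Fact p.Prime] {n : ℕ} {b : GL (Fin n) ℚ_[p]}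
    (hb : b ∈ BBbar p n) : superSum b.val = 0 := by
  unfold superSum
  refine Finset.sum_eq_zero fun i _ => ?_
  split
  · next h =>
      exact hb i ⟨(i : ℕ) + 1, h⟩ (by simp [Fin.lt_def])
  · rfl

lemma master {p n m : ℕ} [Fact p.Prime] {g h : GL (Fin n) ℚ_[p]}
    (hg : Pm p n m g) (hh : Pm p n m h) :
    ‖superSum ((g * h).val) - superSum g.val - superSum h.val‖ ≤ 1 := by
  have hp1 : (1 : ℝ) < p := Nat.one_lt_cast.mpr (Fact.out : p.Prime).one_lt
  have hp0 : (0 : ℝ) < p := lt_trans one_pos hp1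
  have hpR : (p : ℝ) ≠ 0 := ne_of_gt hp0
  have key : superSum ((g * h).val) - superSum g.val - superSum h.val
      = ∑ i : Fin n, ((if hi : (i : ℕ) + 1 < n then (g * h).val i ⟨(i : ℕ) + 1, hi⟩ else 0)
          - (if hi : (i : ℕ) + 1 < n then g.val i ⟨(i : ℕ) + 1, hi⟩ else 0)
          - (if hi : (i : ℕ) + 1 < n then h.val i ⟨(i : ℕ) + 1, hi⟩ else 0)) := by
    unfold superSum
    rw [Finset.sum_sub_distrib, Finset.sum_sub_distrib]
  rw [key]
  refine IsUltrametricDist.norm_sum_le_of_forall_le_of_nonneg zero_le_one fun i _ => ?_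
  by_cases hi : (i : ℕ) + 1 < n
  · simp only [dif_pos hi]
    set j : Fin n := ⟨(i : ℕ) + 1, hi⟩ with hjdef
    have hij : i ≠ j := by
      intro hij
      have : (i : ℕ) = (i : ℕ) + 1 := congrArg Fin.val hij
      omega
    have h1 : ∑ k, g.val i k * (1 : Matrix (Fin n) (Fin n) ℚ_[p]) k j = g.val i j := by
      rw [← Matrix.mul_apply, Matrix.mul_one]
    have h2 : ∑ k, (1 : Matrix (Fin n) (Fin n) ℚ_[p]) i k * h.val k j = h.val i j := by
      rw [← Matrix.mul_apply, Matrix.one_mul]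
    have h3 : ∑ k : Fin n, (1 : Matrix (Fin n) (Fin n) ℚ_[p]) i k
        * (1 : Matrix (Fin n) (Fin n) ℚ_[p]) k j = 0 := by
      rw [← Matrix.mul_apply, Matrix.one_mul, Matrix.one_apply_ne hij]
    have hexp : (g * h).val i j - g.val i j - h.val i j
        = ∑ k : Fin n, (g.val i k - (1 : Matrix (Fin n) (Fin n) ℚ_[p]) i k)
            * (h.val k j - (1 : Matrix (Fin n) (Fin n) ℚ_[p]) k j) := by
      have : (g * h).val i j = ∑ k : Fin n, g.val i k * h.val k j := by
        rw [Units.val_mul, Matrix.mul_apply]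
      rw [this]
      simp only [sub_mul, mul_sub, Finset.sum_sub_distrib]
      rw [h1, h2, h3]
      ring
    rw [hexp]
    refine IsUltrametricDist.norm_sum_le_of_forall_le_of_nonneg zero_le_one fun k _ => ?_
    rw [norm_mul]
    calc ‖g.val i k - (1 : Matrix (Fin n) (Fin n) ℚ_[p]) i k‖
          * ‖h.val k j - (1 : Matrix (Fin n) (Fin n) ℚ_[p]) k j‖
        ≤ (p : ℝ) ^ (2 * (m : ℤ) * ((k : ℤ) - (i : ℤ)) - (m : ℤ))
          * (p : ℝ) ^ (2 * (m : ℤ) * ((j : ℤ) - (k : ℤ)) - (m : ℤ)) := by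
          exact mul_le_mul (hg i k) (hh k j) (norm_nonneg _) (le_of_lt (zpow_pos hp0 _))
      _ ≤ 1 := by
          rw [← zpow_add₀ hpR]
          have hjval : (j : ℤ) = (i : ℤ) + 1 := by simp [hjdef]
          have hexp0 : 2 * (m : ℤ) * ((k : ℤ) - (i : ℤ)) - (m : ℤ)
              + (2 * (m : ℤ) * ((j : ℤ) - (k : ℤ)) - (m : ℤ)) = 0 := by
            rw [hjval]; ring
          rw [hexp0, zpow_zero]
  · simp only [dif_neg hi]
    simp
/-- The map `ψ_m : J_m → ℂˣ`, `ψ_m(b̄·u) = ψ(u)` (via the unique factorization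
`j = b̄·u`, `b̄ ∈ B̄_{n,m}`, `u ∈ N_{n,m}`), is multiplicative: `ψ_m(j·j') = ψ_m(j)·ψ_m(j')`. -/
theorem statement6 (p n m : ℕ) [Fact p.Prime] (hn : 2 ≤ n) (hm : 1 ≤ m)
    (ψ : AddChar ℚ_[p] ℂ)
    (hψtriv : ∀ x : ℚ_[p], ‖x‖ ≤ 1 → ψ x = 1)
    (hψnontriv : ∃ x : ℚ_[p], ‖x‖ ≤ (p : ℝ) ∧ ψ x ≠ 1)
    (j j' : GL (Fin n) ℚ_[p]) (hj : j ∈ Jm p n m) (hj' : j' ∈ Jm p n m)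
    (b u b' u' b'' u'' : GL (Fin n) ℚ_[p])
    (hb : b ∈ BBbar p n ∩ Jm p n m) (hu : u ∈ NN p n ∩ Jm p n m) (hfac : j = b * u)
    (hb' : b' ∈ BBbar p n ∩ Jm p n m) (hu' : u' ∈ NN p n ∩ Jm p n m) (hfac' : j' = b' * u')
    (hb'' : b'' ∈ BBbar p n ∩ Jm p n m) (hu'' : u'' ∈ NN p n ∩ Jm p n m)
    (hfac'' : j * j' = b'' * u'') :
    ψ (superSum u''.val) = ψ (superSum u.val) * ψ (superSum u'.val) := by
  have hmulψ : ∀ g h : GL (Fin n) ℚ_[p], Pm p n m g → Pm p n m h →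
      ψ (superSum ((g * h).val)) = ψ (superSum g.val) * ψ (superSum h.val) := by
    intro g h hg hh
    have hz := master hg hh
    have hsplit : superSum ((g * h).val) = (superSum g.val + superSum h.val) +
        (superSum ((g * h).val) - superSum g.val - superSum h.val) := by ring
    rw [hsplit, AddChar.map_add_eq_mul, hψtriv _ hz, mul_one, AddChar.map_add_eq_mul]
  have Pj := Jm_Pm hj
  have Pj' := Jm_Pm hj'
  have Pb := Jm_Pm hb.2
  have Pu := Jm_Pm hu.2
  have Pb' := Jm_Pm hb'.2
  have Pu' := Jm_Pm hu'.2
  have Pb'' := Jm_Pm hb''.2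
  have Pu'' := Jm_Pm hu''.2
  have e1 : ψ (superSum u''.val) = ψ (superSum ((b'' * u'').val)) := by
    rw [hmulψ _ _ Pb'' Pu'', superSum_lower hb''.1, AddChar.map_zero_eq_one, one_mul]
  rw [e1, ← hfac'', hmulψ _ _ Pj Pj', hfac, hfac',
    hmulψ _ _ Pb Pu, hmulψ _ _ Pb' Pu',
    superSum_lower hb.1, superSum_lower hb'.1, AddChar.map_zero_eq_one, one_mul, one_mul]

end
end

section
/- Let μ be the Haar measure on (ℚ_p,+) normalized so that μ(ℤ_p) = 1, and let ψ be an additive character of ℚ_p that is trivial on ℤ_p and nontrivial on p⁻¹ℤ_p. Let f : ℚ_p → ℂ be locally constant with compact support, and define its Fourier transform by f̂(y) = ∫_{ℚ_p} f(x)·ψ(−xy) dμ(x). Then f̂ is again locally constant with compact support, and the Fourier inversion formula holds: f(x) = ∫_{ℚ_p} f̂(y)·ψ(xy) dμ(y) for every x ∈ ℚ_p. -/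
/-!
Write `B n` for the ball `‖x‖ ≤ p ^ n`, i.e. `p⁻ⁿ ℤ_p`. Everything rests on the orthogonality
relation `∫_{B n} ψ (x y) dμ(x) = μ (B n) · [‖y‖ ≤ p ^ (-n)]`: because `ψ` has conductor exactly
`ℤ_p`, for `‖y‖ > p ^ (-n)` some `u ∈ B n` has `ψ (u y) ≠ 1`, and translating by `u` multiplies
the integral by `ψ (u y)`.

A locally constant, compactly supported `f` is invariant under translations by some `B (-n)` and
supported in some `B m`. The same translation trick shows that `f̂` vanishes off `B n` and is
invariant under `B (-m)`. For the inversion formula, exchange the two integrals (the integrand is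
continuous with compact support) and apply orthogonality in the inner one; what is left is
`μ (B n) μ (B (-n)) f x`. Finally `μ (B n) μ (B (-n)) = μ (B 0) ^ 2 = 1`, because `B (±n)` are
images of `B 0` under the mutually inverse scalings by `p ^ (∓n)`, and scaling multiplies Haar
measure by a character of `ℚ_pˣ`.
-/

open MeasureTheory

noncomputable section

variable (p : ℕ) [Fact p.Prime]

instance : MeasurableSpace ℚ_[p] := borel _
instance : BorelSpace ℚ_[p] := ⟨rfl⟩

open Metric
open scoped Pointwise

theorem integral_eq_zero_of_map_add_right_eq_mul {G : Type*} [MeasurableSpace G] [AddGroup G]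
    [MeasurableAdd G] {μ : Measure G} [μ.IsAddRightInvariant] {g : G → ℂ} {u : G} {c : ℂ}
    (hg : ∀ x, g (x + u) = c * g x) (hc : c ≠ 1) : ∫ x, g x ∂μ = 0 := by
  have h : c * ∫ x, g x ∂μ = ∫ x, g x ∂μ := by
    simp_rw [← integral_const_mul, ← hg, integral_add_right_eq_self g u]
  have h' : (c - 1) * ∫ x, g x ∂μ = 0 := by rw [sub_mul, h, one_mul, sub_self]
  exact (mul_eq_zero.1 h').resolve_left (sub_ne_zero.2 hc)

theorem measure_smul_mul_measure_inv_smul {G A : Type*} [Group G] [AddCommGroup A]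
    [DistribMulAction G A] [TopologicalSpace A] [IsTopologicalAddGroup A] [LocallyCompactSpace A]
    [ContinuousConstSMul G A] [MeasurableSpace A] [BorelSpace A] (μ : Measure A)
    [μ.IsAddHaarMeasure] [μ.Regular] (g : G) (s : Set A) :
    μ (g • s) * μ (g⁻¹ • s) = μ s * μ s := by
  rw [← distribHaarChar_mul μ g, ← distribHaarChar_mul μ g⁻¹, mul_mul_mul_comm, ← ENNReal.coe_mul,
    ← map_mul, mul_inv_cancel, map_one, ENNReal.coe_one, one_mul]

theorem IsLocallyConstant.of_forall_norm_le_map_add {E Y : Type*} [SeminormedAddCommGroup E]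
    {g : E → Y} {r : ℝ} (hr : 0 < r) (hg : ∀ x v, ‖v‖ ≤ r → g (x + v) = g x) :
    IsLocallyConstant g := by
  refine (IsLocallyConstant.iff_eventually_eq g).2 fun x => ?_
  filter_upwards [closedBall_mem_nhds x hr] with y hy
  rw [← add_sub_cancel x y]
  exact hg x (y - x) (mem_closedBall_iff_norm.1 hy)

theorem IsLocallyConstant.exists_pos_forall_dist_lt {X Y : Type*} [PseudoMetricSpace X] [Zero Y]
    {f : X → Y} (hf : IsLocallyConstant f) (h'f : HasCompactSupport f) :
    ∃ δ > 0, ∀ x y, dist x y < δ → f x = f y := by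
  obtain ⟨δ, hδ, hball⟩ := lebesgue_number_lemma_of_metric h'f (c := fun z => f ⁻¹' {f z})
    (fun z => hf.isOpen_fiber _) (fun x _ => Set.mem_iUnion.2 ⟨x, rfl⟩)
  have hsupp : ∀ x ∈ tsupport f, ∀ y, dist x y < δ → f x = f y := by
    intro x hx y hxy
    obtain ⟨z, hz⟩ := hball x hx
    rw [hz (mem_ball_self hδ), hz (mem_ball'.2 hxy)]
  refine ⟨δ, hδ, fun x y hxy => ?_⟩
  by_cases hx : x ∈ tsupport f
  · exact hsupp x hx y hxy
  by_cases hy : y ∈ tsupport f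
  · exact (hsupp y hy x (dist_comm x y ▸ hxy)).symm
  rw [image_eq_zero_of_notMem_tsupport hx, image_eq_zero_of_notMem_tsupport hy]

theorem AddChar.isLocallyConstant_of_forall_norm_le {E M : Type*} [SeminormedAddCommGroup E]
    [Monoid M] (ψ : AddChar E M) {r : ℝ} (hr : 0 < r) (hψ : ∀ x, ‖x‖ ≤ r → ψ x = 1) :
    IsLocallyConstant ψ :=
  .of_forall_norm_le_map_add hr fun x v hv => by rw [map_add_eq_mul, hψ v hv, mul_one]

theorem IsUltrametricDist.add_mem_closedBall_zero_iff {E : Type*} [SeminormedAddGroup E]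
    [IsUltrametricDist E] {r : ℝ} (hr : 0 < r) {x u : E} (hu : ‖u‖ ≤ r) :
    x + u ∈ closedBall 0 r ↔ x ∈ closedBall 0 r :=
  (closedBall_openAddSubgroup E hr).add_mem_cancel_right (mem_closedBall_zero_iff.2 hu)

namespace Padic

theorem one_lt_natCast_real : (1 : ℝ) < p := by exact_mod_cast (Fact.out : p.Prime).one_lt

variable {p}

theorem norm_p_zpow_neg (n : ℤ) : ‖(p : ℚ_[p]) ^ (-n)‖ = (p : ℝ) ^ n := by
  rw [norm_zpow, norm_p, inv_zpow', neg_neg]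

theorem exists_subset_closedBall_zpow {s : Set ℚ_[p]} (hs : Bornology.IsBounded s) :
    ∃ n : ℤ, s ⊆ closedBall 0 ((p : ℝ) ^ n) := by
  obtain ⟨r, hr⟩ := hs.subset_closedBall 0
  obtain ⟨k, hk⟩ := pow_unbounded_of_one_lt r (one_lt_natCast_real p)
  exact ⟨k, hr.trans (closedBall_subset_closedBall (by rw [zpow_natCast]; exact hk.le))⟩

theorem exists_forall_norm_le_zpow_map_add_eq {Y : Type*} [Zero Y] {f : ℚ_[p] → Y}
    (hf : IsLocallyConstant f) (h'f : HasCompactSupport f) :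
    ∃ n : ℤ, ∀ x u, ‖u‖ ≤ (p : ℝ) ^ (-n) → f (x + u) = f x := by
  obtain ⟨δ, hδ, hf'⟩ := hf.exists_pos_forall_dist_lt h'f
  obtain ⟨k, hk⟩ := exists_pow_lt_of_lt_one hδ (inv_lt_one_of_one_lt₀ (one_lt_natCast_real p))
  refine ⟨k, fun x u hu => hf' _ _ ?_⟩
  rw [dist_eq_norm, add_sub_cancel_left]
  rw [zpow_neg, zpow_natCast, ← inv_pow] at hu
  exact hu.trans_lt hk

theorem measure_closedBall_zpow_mul_neg (μ : Measure ℚ_[p]) [μ.IsAddHaarMeasure] (n : ℤ) :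
    μ (closedBall 0 ((p : ℝ) ^ n)) * μ (closedBall 0 ((p : ℝ) ^ (-n))) =
      μ (closedBall 0 1) * μ (closedBall 0 1) := by
  have hp : (p : ℚ_[p]) ^ (-n) ≠ 0 :=
    zpow_ne_zero _ (by exact_mod_cast (Fact.out : p.Prime).ne_zero)
  have hball (c : ℚ_[p]ˣ) : c • closedBall (0 : ℚ_[p]) 1 = closedBall 0 ‖(c : ℚ_[p])‖ := by
    rw [Units.smul_def, smul_closedBall _ 0 zero_le_one, smul_zero, mul_one]
  have := measure_smul_mul_measure_inv_smul μ (Units.mk0 _ hp) (closedBall 0 1)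
  rwa [hball, hball, Units.val_inv_eq_inv_val, Units.val_mk0, norm_inv, norm_p_zpow_neg,
    ← zpow_neg] at this

theorem measureReal_closedBall_zpow_mul_neg (μ : Measure ℚ_[p]) [μ.IsAddHaarMeasure]
    (hμ : μ {x : ℚ_[p] | ‖x‖ ≤ 1} = 1) (n : ℤ) :
    μ.real (closedBall 0 ((p : ℝ) ^ n)) * μ.real (closedBall 0 ((p : ℝ) ^ (-n))) = 1 := by
  have h1 : μ (closedBall 0 1) = 1 := by
    rwa [show closedBall (0 : ℚ_[p]) 1 = {x | ‖x‖ ≤ 1} by ext; simp]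
  rw [measureReal_def, measureReal_def, ← ENNReal.toReal_mul, measure_closedBall_zpow_mul_neg,
    h1, mul_one, ENNReal.toReal_one]

section Character

variable {ψ : AddChar ℚ_[p] ℂ}

theorem exists_norm_le_addChar_mul_ne_one (hψ : ∃ x : ℚ_[p], ‖x‖ ≤ (p : ℝ) ∧ ψ x ≠ 1) {n : ℤ}
    {y : ℚ_[p]} (hy : (p : ℝ) ^ n < ‖y‖) :
    ∃ u : ℚ_[p], ‖u‖ ≤ (p : ℝ) ^ (-n) ∧ ψ (u * y) ≠ 1 := by
  obtain ⟨x, hx, hψx⟩ := hψ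
  have hp : (0 : ℝ) < p := zero_lt_one.trans (one_lt_natCast_real p)
  -- the norm of `y` is a power of `p`, so it is at least `p ^ (n + 1)`
  have hy' : (p : ℝ) ^ (n + 1) ≤ ‖y‖ := not_lt.1 fun h => hy.not_ge
    ((norm_le_pow_iff_norm_lt_pow_add_one y n).2 h)
  have hy0 : y ≠ 0 := norm_pos_iff.1 ((zpow_pos hp _).trans_le hy')
  refine ⟨x * y⁻¹, ?_, by rwa [inv_mul_cancel_right₀ hy0]⟩
  calc ‖x * y⁻¹‖ = ‖x‖ / ‖y‖ := by rw [norm_mul, norm_inv, div_eq_mul_inv]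
    _ ≤ p / (p : ℝ) ^ (n + 1) := div_le_div₀ hp.le hx (zpow_pos hp _) hy'
    _ = (p : ℝ) ^ (-n) := by
      rw [zpow_add_one₀ hp.ne', div_mul_cancel_right₀ hp.ne', zpow_neg]

theorem setIntegral_closedBall_addChar (μ : Measure ℚ_[p]) [μ.IsAddHaarMeasure]
    (hψtriv : ∀ x : ℚ_[p], ‖x‖ ≤ 1 → ψ x = 1)
    (hψnontriv : ∃ x : ℚ_[p], ‖x‖ ≤ (p : ℝ) ∧ ψ x ≠ 1) (n : ℤ) (y : ℚ_[p]) :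
    ∫ x in closedBall 0 ((p : ℝ) ^ n), ψ (x * y) ∂μ =
      if ‖y‖ ≤ (p : ℝ) ^ (-n) then (μ.real (closedBall 0 ((p : ℝ) ^ n)) : ℂ) else 0 := by
  have hp : (0 : ℝ) < p := zero_lt_one.trans (one_lt_natCast_real p)
  split_ifs with hy
  · have h1 : ∀ x ∈ closedBall (0 : ℚ_[p]) ((p : ℝ) ^ n), ψ (x * y) = 1 := fun x hx => by
      refine hψtriv _ ?_
      calc ‖x * y‖ = ‖x‖ * ‖y‖ := norm_mul x y
        _ ≤ (p : ℝ) ^ n * (p : ℝ) ^ (-n) :=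
          mul_le_mul (mem_closedBall_zero_iff.1 hx) hy (norm_nonneg _) (zpow_pos hp _).le
        _ = 1 := by rw [← zpow_add₀ hp.ne', add_neg_cancel, zpow_zero]
    rw [setIntegral_congr_fun measurableSet_closedBall h1, setIntegral_const, Complex.real_smul,
      mul_one]
  · obtain ⟨u, hu, hψu⟩ := exists_norm_le_addChar_mul_ne_one hψnontriv (not_le.1 hy)
    rw [neg_neg] at hu
    have hmem (x : ℚ_[p]) :=
      IsUltrametricDist.add_mem_closedBall_zero_iff (x := x) (zpow_pos hp n) hu
    rw [← integral_indicator measurableSet_closedBall]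
    refine integral_eq_zero_of_map_add_right_eq_mul (u := u) (fun x => ?_) hψu
    by_cases hx : x ∈ closedBall (0 : ℚ_[p]) ((p : ℝ) ^ n)
    · rw [Set.indicator_of_mem ((hmem x).2 hx), Set.indicator_of_mem hx, add_mul, add_comm,
        AddChar.map_add_eq_mul]
    · rw [Set.indicator_of_notMem (mt (hmem x).1 hx), Set.indicator_of_notMem hx, mul_zero]

end Character

def fourierIntegral (μ : Measure ℚ_[p]) (ψ : AddChar ℚ_[p] ℂ) (f : ℚ_[p] → ℂ) (y : ℚ_[p]) : ℂ :=
  ∫ x, f x * ψ (-(x * y)) ∂μ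

section Fourier

variable {μ : Measure ℚ_[p]} {ψ : AddChar ℚ_[p] ℂ} {f : ℚ_[p] → ℂ}

theorem fourierIntegral_eq_zero_of_lt_norm [μ.IsAddHaarMeasure]
    (hψ : ∃ x : ℚ_[p], ‖x‖ ≤ (p : ℝ) ∧ ψ x ≠ 1) {n : ℤ}
    (hf : ∀ x u, ‖u‖ ≤ (p : ℝ) ^ (-n) → f (x + u) = f x) {y : ℚ_[p]}
    (hy : (p : ℝ) ^ n < ‖y‖) : fourierIntegral μ ψ f y = 0 := by
  obtain ⟨u, hu, hψu⟩ := exists_norm_le_addChar_mul_ne_one hψ hy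
  refine integral_eq_zero_of_map_add_right_eq_mul (u := -u) (c := ψ (u * y)) (fun x => ?_) hψu
  rw [hf x (-u) (by rwa [norm_neg]), show -((x + -u) * y) = u * y + -(x * y) by ring,
    AddChar.map_add_eq_mul, mul_left_comm]

theorem fourierIntegral_add_of_norm_le (hψ : ∀ x : ℚ_[p], ‖x‖ ≤ 1 → ψ x = 1) {n : ℤ}
    (hf : Function.support f ⊆ closedBall 0 ((p : ℝ) ^ n)) (y : ℚ_[p]) {v : ℚ_[p]}
    (hv : ‖v‖ ≤ (p : ℝ) ^ (-n)) : fourierIntegral μ ψ f (y + v) = fourierIntegral μ ψ f y := by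
  have hp : (0 : ℝ) < p := zero_lt_one.trans (one_lt_natCast_real p)
  refine integral_congr_ae (.of_forall fun x => ?_)
  by_cases hx : f x = 0
  · simp only [hx, zero_mul]
  have hxv : ψ (-(x * v)) = 1 := hψ _ <| calc
    ‖-(x * v)‖ = ‖x‖ * ‖v‖ := by rw [norm_neg, norm_mul]
    _ ≤ (p : ℝ) ^ n * (p : ℝ) ^ (-n) :=
      mul_le_mul (mem_closedBall_zero_iff.1 (hf hx)) hv (norm_nonneg _) (zpow_pos hp _).le
    _ = 1 := by rw [← zpow_add₀ hp.ne', add_neg_cancel, zpow_zero]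
  simp only
  rw [mul_add, neg_add, AddChar.map_add_eq_mul, hxv, mul_one]

theorem isLocallyConstant_fourierIntegral (hψ : ∀ x : ℚ_[p], ‖x‖ ≤ 1 → ψ x = 1) {n : ℤ}
    (hf : Function.support f ⊆ closedBall 0 ((p : ℝ) ^ n)) :
    IsLocallyConstant (fourierIntegral μ ψ f) :=
  .of_forall_norm_le_map_add (zpow_pos (zero_lt_one.trans (one_lt_natCast_real p)) _)
    fun y _ hv => fourierIntegral_add_of_norm_le hψ hf y hv

theorem hasCompactSupport_fourierIntegral [μ.IsAddHaarMeasure]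
    (hψ : ∃ x : ℚ_[p], ‖x‖ ≤ (p : ℝ) ∧ ψ x ≠ 1) {n : ℤ}
    (hf : ∀ x u, ‖u‖ ≤ (p : ℝ) ^ (-n) → f (x + u) = f x) :
    HasCompactSupport (fourierIntegral μ ψ f) :=
  .intro (isCompact_closedBall 0 ((p : ℝ) ^ n)) fun _ hy =>
    fourierIntegral_eq_zero_of_lt_norm hψ hf (not_le.1 (mt mem_closedBall_zero_iff.2 hy))

theorem integral_mul_setIntegral_closedBall_addChar [μ.IsAddHaarMeasure]
    (hψtriv : ∀ x : ℚ_[p], ‖x‖ ≤ 1 → ψ x = 1) (hψnontriv : ∃ x : ℚ_[p], ‖x‖ ≤ (p : ℝ) ∧ ψ x ≠ 1)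
    {n : ℤ} (hper : ∀ x u, ‖u‖ ≤ (p : ℝ) ^ (-n) → f (x + u) = f x) (x : ℚ_[p]) :
    ∫ b, f b * ∫ y in closedBall 0 ((p : ℝ) ^ n), ψ (y * (x - b)) ∂μ ∂μ =
      μ.real (closedBall 0 ((p : ℝ) ^ n)) * μ.real (closedBall 0 ((p : ℝ) ^ (-n))) * f x := by
  set r := (p : ℝ) ^ (-n)
  have hkernel (b : ℚ_[p]) : f b * ∫ y in closedBall 0 ((p : ℝ) ^ n), ψ (y * (x - b)) ∂μ =
      (closedBall x r).indicator (fun _ => μ.real (closedBall 0 ((p : ℝ) ^ n)) * f x) b := by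
    rw [setIntegral_closedBall_addChar μ hψtriv hψnontriv]
    by_cases hb : ‖x - b‖ ≤ r
    · rw [if_pos hb, Set.indicator_of_mem (mem_closedBall_iff_norm'.2 hb), mul_comm,
        ← hper x (b - x) (by rwa [norm_sub_rev]), add_sub_cancel]
    · rw [if_neg hb, Set.indicator_of_notMem (mt mem_closedBall_iff_norm'.1 hb), mul_zero]
  simp_rw [hkernel]
  rw [integral_indicator_const _ measurableSet_closedBall, Measure.addHaar_real_closedBall_center,
    Complex.real_smul]
  ring

theorem integral_fourierIntegral_mul_addChar [μ.IsAddHaarMeasure]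
    (hψtriv : ∀ x : ℚ_[p], ‖x‖ ≤ 1 → ψ x = 1) (hψnontriv : ∃ x : ℚ_[p], ‖x‖ ≤ (p : ℝ) ∧ ψ x ≠ 1)
    {n : ℤ} (hper : ∀ x u, ‖u‖ ≤ (p : ℝ) ^ (-n) → f (x + u) = f x) (hf : Continuous f)
    (h'f : HasCompactSupport f) (x : ℚ_[p]) :
    ∫ y, fourierIntegral μ ψ f y * ψ (x * y) ∂μ =
      μ.real (closedBall 0 ((p : ℝ) ^ n)) * μ.real (closedBall 0 ((p : ℝ) ^ (-n))) * f x := by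
  have hp : (0 : ℝ) < p := zero_lt_one.trans (one_lt_natCast_real p)
  set S := closedBall (0 : ℚ_[p]) ((p : ℝ) ^ n)
  have hψ : Continuous ψ := (ψ.isLocallyConstant_of_forall_norm_le one_pos hψtriv).continuous
  have hS : IsClopen S :=
    ⟨isClosed_closedBall, IsUltrametricDist.isOpen_closedBall _ (zpow_pos hp n).ne'⟩
  set F : ℚ_[p] → ℚ_[p] → ℂ := fun y b => S.indicator 1 y * (f b * ψ ((x - b) * y))
  have hF : Continuous F.uncurry :=
    ((hS.continuous_indicator continuous_const).comp continuous_fst).mul <| (hf.comp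
      continuous_snd).mul (hψ.comp ((continuous_const.sub continuous_snd).mul continuous_fst))
  have h'F : HasCompactSupport F.uncurry := by
    refine .intro ((isCompact_closedBall (0 : ℚ_[p]) ((p : ℝ) ^ n)).prod h'f) fun z hz => ?_
    rcases not_and_or.1 (Set.mem_prod.not.1 hz) with hz | hz
    · simp only [F, Function.uncurry]
      rw [Set.indicator_of_notMem hz, zero_mul]
    · simp only [F, Function.uncurry, image_eq_zero_of_notMem_tsupport hz, zero_mul, mul_zero]
  have hFy (y : ℚ_[p]) :
      ∫ b, F y b ∂μ = S.indicator 1 y * (fourierIntegral μ ψ f y * ψ (x * y)) := by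
    simp only [F, fourierIntegral, integral_const_mul, ← integral_mul_const, mul_assoc,
      ← AddChar.map_add_eq_mul]
    congr! 5 with b
    ring
  have hFb (b : ℚ_[p]) : ∫ y, F y b ∂μ = f b * ∫ y in S, ψ (y * (x - b)) ∂μ := by
    rw [← integral_const_mul, ← integral_indicator hS.isClosed.measurableSet]
    congr 1 with y
    by_cases hy : y ∈ S <;> simp [F, hy, mul_comm y]
  calc ∫ y, fourierIntegral μ ψ f y * ψ (x * y) ∂μ = ∫ y, ∫ b, F y b ∂μ ∂μ := by
        refine integral_congr_ae (.of_forall fun y => ?_)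
        by_cases hy : y ∈ S
        · simp only [hFy, Set.indicator_of_mem hy, Pi.one_apply, one_mul]
        · dsimp only
          rw [fourierIntegral_eq_zero_of_lt_norm hψnontriv hper
            (not_le.1 (mt mem_closedBall_zero_iff.2 hy)), hFy, Set.indicator_of_notMem hy,
            zero_mul, zero_mul]
    _ = ∫ b, ∫ y, F y b ∂μ ∂μ := integral_integral_swap_of_hasCompactSupport hF h'F
    _ = _ := by
      simp_rw [hFb]
      exact integral_mul_setIntegral_closedBall_addChar hψtriv hψnontriv hper x

end Fourier

end Padic

open Padic in
/-- Fourier inversion on `ℚ_p`: for `μ` the Haar measure with `μ(ℤ_p) = 1`,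
`ψ` an additive character trivial on `ℤ_p` and nontrivial on `p⁻¹ℤ_p`, and `f` locally constant
with compact support, the Fourier transform `f̂(y) = ∫ f(x) ψ(-xy) dμ(x)` is again locally
constant with compact support, and `f(x) = ∫ f̂(y) ψ(xy) dμ(y)` for all `x`. -/
theorem statement14 (μ : Measure ℚ_[p]) [μ.IsAddHaarMeasure]
    (hμ : μ {x : ℚ_[p] | ‖x‖ ≤ 1} = 1)
    (ψ : AddChar ℚ_[p] ℂ)
    (hψtriv : ∀ x : ℚ_[p], ‖x‖ ≤ 1 → ψ x = 1)
    (hψnontriv : ∃ x : ℚ_[p], ‖x‖ ≤ (p : ℝ) ∧ ψ x ≠ 1)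
    (f : ℚ_[p] → ℂ) (hf1 : IsLocallyConstant f) (hf2 : HasCompactSupport f)
    (fhat : ℚ_[p] → ℂ) (hfhat : ∀ y, fhat y = ∫ x, f x * ψ (-(x * y)) ∂μ) :
    IsLocallyConstant fhat ∧ HasCompactSupport fhat ∧
      ∀ x, f x = ∫ y, fhat y * ψ (x * y) ∂μ := by
  obtain rfl : fhat = fourierIntegral μ ψ f := funext hfhat
  obtain ⟨n, hper⟩ := exists_forall_norm_le_zpow_map_add_eq hf1 hf2
  obtain ⟨m, hsupp⟩ := exists_subset_closedBall_zpow hf2.isCompact.isBounded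
  refine ⟨isLocallyConstant_fourierIntegral hψtriv ((subset_tsupport f).trans hsupp),
    hasCompactSupport_fourierIntegral hψnontriv hper, fun x => ?_⟩
  rw [integral_fourierIntegral_mul_addChar hψtriv hψnontriv hper hf1.continuous hf2,
    ← Complex.ofReal_mul, measureReal_closedBall_zpow_mul_neg μ hμ, Complex.ofReal_one, one_mul]
end
end
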